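/- Let A : 𝕆 → 𝕆 be an ℝ-linear map with A(1) = 0 and A(Im 𝕆) ⊆ Im 𝕆, and let [A] be the 7×7 real matrix of A restricted to Im 𝕆 in the basis e₁,…,e₇. Then the following are equivalent: (1) [A] is skew-symmetric and A is a derivation of 𝕆, i.e. A(x·y) = A(x)·y + x·A(y) for all x,y ∈ 𝕆; (2) there exist real numbers x₂,…,x₇, y₃,…,y₇, z₅,z₆,z₇ such that [A] = G(x₂,…,x₇; y₃,…,y₇; z₅,z₆,z₇). (Thus the Lie algebra 𝔤₂ of skew-symmetric derivations of 𝕆 is exactly the 14-parameter family of matrices G.) -/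

import Mathlib

noncomputable section

/-- The octonions, as pairs of quaternions. -/
abbrev Octo : Type := Quaternion ℝ × Quaternion ℝ

/-- Octonion multiplication. -/
def omul (x y : Octo) : Octo :=
  (x.1 * y.1 - star y.2 * x.2, y.2 * x.1 + x.2 * star y.1)

/-- The unit octonion. -/
def oone : Octo := (1, 0)

/-- The inner product on the octonions. -/
def oinner (x y : Octo) : ℝ :=
  (x.1 * star y.1).re + (x.2 * star y.2).re

/-- The real part of an octonion. -/
def oRe (x : Octo) : ℝ := x.1.re

/-- An octonion is imaginary if its real part vanishes. -/
def isIm (x : Octo) : Prop := oRe x = 0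

/-- The standard orthonormal basis e₁,…,e₇ of Im 𝕆. -/
def oe : Fin 7 → Octo :=
  ![((⟨0,1,0,0⟩ : Quaternion ℝ), 0),
    ((⟨0,0,1,0⟩ : Quaternion ℝ), 0),
    ((⟨0,0,0,1⟩ : Quaternion ℝ), 0),
    (0, 1),
    (0, (⟨0,1,0,0⟩ : Quaternion ℝ)),
    (0, (⟨0,0,1,0⟩ : Quaternion ℝ)),
    (0, (⟨0,0,0,1⟩ : Quaternion ℝ))]

/-- The 14-parameter family of skew-symmetric matrices `G` (the Lie algebra 𝔤₂). -/
def Gmat (x2 x3 x4 x5 x6 x7 y3 y4 y5 y6 y7 z5 z6 z7 : ℝ) : Matrix (Fin 7) (Fin 7) ℝ :=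
  !![0, -x2, -x3, -x4, -x5, -x6, -x7;
     x2, 0, -y3, -y4, -y5, -y6, -y7;
     x3, y3, 0, -(x6-y5), -(x7+y4), -(-x4+y7), -(-x5-y6);
     x4, y4, x6-y5, 0, -z5, -z6, -z7;
     x5, y5, x7+y4, z5, 0, -(x2+z7), -(x3-z6);
     x6, y6, -x4+y7, z6, x2+z7, 0, -(y3+z5);
     x7, y7, -x5-y6, z7, x3-z6, y3+z5, 0]

/-- The matrix of a linear map on Im 𝕆 in the basis e₁,…,e₇. -/
def matOf (A : Octo →ₗ[ℝ] Octo) : Matrix (Fin 7) (Fin 7) ℝ :=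
  Matrix.of fun i j : Fin 7 => oinner (A (oe j)) (oe i)


section AuxiliaryForStatement12
open scoped Quaternion
def qmk (a b c d : ℝ) : Quaternion ℝ := ⟨a, b, c, d⟩
@[simp] lemma mk_eq_qmk (a b c d : ℝ) : (QuaternionAlgebra.mk a b c d : ℍ[ℝ,-1,0,-1]) = qmk a b c d := rfl
@[simp] lemma qmk_re (a b c d : ℝ) : (qmk a b c d).re = a := rfl
@[simp] lemma qmk_imI (a b c d : ℝ) : (qmk a b c d).imI = b := rfl
@[simp] lemma qmk_imJ (a b c d : ℝ) : (qmk a b c d).imJ = c := rfl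
@[simp] lemma qmk_imK (a b c d : ℝ) : (qmk a b c d).imK = d := rfl
@[simp] lemma pair_retype1 (p q : Quaternion ℝ) : (@Prod.mk (ℍ[ℝ,-1,0,-1]) (Quaternion ℝ) p q : Octo) = @Prod.mk (Quaternion ℝ) (Quaternion ℝ) p q := rfl
@[simp] lemma pair_retype2 (p q : Quaternion ℝ) : (@Prod.mk (Quaternion ℝ) (ℍ[ℝ,-1,0,-1]) p q : Octo) = @Prod.mk (Quaternion ℝ) (Quaternion ℝ) p q := rfl
@[simp] lemma pair_retype3 (p q : Quaternion ℝ) : (@Prod.mk (ℍ[ℝ,-1,0,-1]) (ℍ[ℝ,-1,0,-1]) p q : Octo) = @Prod.mk (Quaternion ℝ) (Quaternion ℝ) p q := rfl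
@[simp] lemma qneg_re (q : Quaternion ℝ) : (-q).re = -q.re := rfl
@[simp] lemma qadd_re (p q : Quaternion ℝ) : (p + q).re = p.re + q.re := rfl
@[simp] lemma qsub_re (p q : Quaternion ℝ) : (p - q).re = p.re - q.re := rfl
@[simp] lemma qzero_re : (0 : Quaternion ℝ).re = 0 := rfl
@[simp] lemma qone_re : (1 : Quaternion ℝ).re = 1 := rfl
@[simp] lemma qneg_imI (q : Quaternion ℝ) : (-q).imI = -q.imI := rfl
@[simp] lemma qadd_imI (p q : Quaternion ℝ) : (p + q).imI = p.imI + q.imI := rfl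
@[simp] lemma qsub_imI (p q : Quaternion ℝ) : (p - q).imI = p.imI - q.imI := rfl
@[simp] lemma qzero_imI : (0 : Quaternion ℝ).imI = 0 := rfl
@[simp] lemma qone_imI : (1 : Quaternion ℝ).imI = 0 := rfl
@[simp] lemma qneg_imJ (q : Quaternion ℝ) : (-q).imJ = -q.imJ := rfl
@[simp] lemma qadd_imJ (p q : Quaternion ℝ) : (p + q).imJ = p.imJ + q.imJ := rfl
@[simp] lemma qsub_imJ (p q : Quaternion ℝ) : (p - q).imJ = p.imJ - q.imJ := rfl
@[simp] lemma qzero_imJ : (0 : Quaternion ℝ).imJ = 0 := rfl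
@[simp] lemma qone_imJ : (1 : Quaternion ℝ).imJ = 0 := rfl
@[simp] lemma qneg_imK (q : Quaternion ℝ) : (-q).imK = -q.imK := rfl
@[simp] lemma qadd_imK (p q : Quaternion ℝ) : (p + q).imK = p.imK + q.imK := rfl
@[simp] lemma qsub_imK (p q : Quaternion ℝ) : (p - q).imK = p.imK - q.imK := rfl
@[simp] lemma qzero_imK : (0 : Quaternion ℝ).imK = 0 := rfl
@[simp] lemma qone_imK : (1 : Quaternion ℝ).imK = 0 := rfl
@[simp] lemma oneg_fst (x : Octo) : (-x).1 = -x.1 := rfl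
@[simp] lemma oadd_fst (x y : Octo) : (x + y).1 = x.1 + y.1 := rfl
@[simp] lemma osub_fst (x y : Octo) : (x - y).1 = x.1 - y.1 := rfl
@[simp] lemma oneg_snd (x : Octo) : (-x).2 = -x.2 := rfl
@[simp] lemma oadd_snd (x y : Octo) : (x + y).2 = x.2 + y.2 := rfl
@[simp] lemma osub_snd (x y : Octo) : (x - y).2 = x.2 - y.2 := rfl
@[ext] lemma qext {a b : Quaternion ℝ} (h1 : a.re = b.re) (h2 : a.imI = b.imI) (h3 : a.imJ = b.imJ) (h4 : a.imK = b.imK) : a = b := QuaternionAlgebra.ext h1 h2 h3 h4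
@[simp] lemma osmul_fst (c : ℝ) (x : Octo) : (c • x).1 = c • x.1 := rfl
@[simp] lemma osmul_snd (c : ℝ) (x : Octo) : (c • x).2 = c • x.2 := rfl
@[simp] lemma qsmul_re (c : ℝ) (q : Quaternion ℝ) : (c • q).re = c * q.re := rfl
@[simp] lemma qsmul_imI (c : ℝ) (q : Quaternion ℝ) : (c • q).imI = c * q.imI := rfl
@[simp] lemma qsmul_imJ (c : ℝ) (q : Quaternion ℝ) : (c • q).imJ = c * q.imJ := rfl
@[simp] lemma qsmul_imK (c : ℝ) (q : Quaternion ℝ) : (c • q).imK = c * q.imK := rfl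
lemma qre_mul (a b : Quaternion ℝ) : (a * b).re = a.re * b.re - a.imI * b.imI - a.imJ * b.imJ - a.imK * b.imK := Quaternion.re_mul a b
lemma qimI_mul (a b : Quaternion ℝ) : (a * b).imI = a.re * b.imI + a.imI * b.re + a.imJ * b.imK - a.imK * b.imJ := Quaternion.imI_mul a b
lemma qimJ_mul (a b : Quaternion ℝ) : (a * b).imJ = a.re * b.imJ - a.imI * b.imK + a.imJ * b.re + a.imK * b.imI := Quaternion.imJ_mul a b
lemma qimK_mul (a b : Quaternion ℝ) : (a * b).imK = a.re * b.imK + a.imI * b.imJ - a.imJ * b.imI + a.imK * b.re := Quaternion.imK_mul a b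
@[simp] lemma cv2_1 {α : Type*} (x : α) (u : Fin 1 → α) : Matrix.vecCons x u (1 : Fin 2) = u 0 := rfl
@[simp] lemma cv3_1 {α : Type*} (x : α) (u : Fin 2 → α) : Matrix.vecCons x u (1 : Fin 3) = u 0 := rfl
@[simp] lemma cv3_2 {α : Type*} (x : α) (u : Fin 2 → α) : Matrix.vecCons x u (2 : Fin 3) = u 1 := rfl
@[simp] lemma cv4_1 {α : Type*} (x : α) (u : Fin 3 → α) : Matrix.vecCons x u (1 : Fin 4) = u 0 := rfl
@[simp] lemma cv4_2 {α : Type*} (x : α) (u : Fin 3 → α) : Matrix.vecCons x u (2 : Fin 4) = u 1 := rfl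
@[simp] lemma cv4_3 {α : Type*} (x : α) (u : Fin 3 → α) : Matrix.vecCons x u (3 : Fin 4) = u 2 := rfl
@[simp] lemma cv5_1 {α : Type*} (x : α) (u : Fin 4 → α) : Matrix.vecCons x u (1 : Fin 5) = u 0 := rfl
@[simp] lemma cv5_2 {α : Type*} (x : α) (u : Fin 4 → α) : Matrix.vecCons x u (2 : Fin 5) = u 1 := rfl
@[simp] lemma cv5_3 {α : Type*} (x : α) (u : Fin 4 → α) : Matrix.vecCons x u (3 : Fin 5) = u 2 := rfl
@[simp] lemma cv5_4 {α : Type*} (x : α) (u : Fin 4 → α) : Matrix.vecCons x u (4 : Fin 5) = u 3 := rfl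
@[simp] lemma cv6_1 {α : Type*} (x : α) (u : Fin 5 → α) : Matrix.vecCons x u (1 : Fin 6) = u 0 := rfl
@[simp] lemma cv6_2 {α : Type*} (x : α) (u : Fin 5 → α) : Matrix.vecCons x u (2 : Fin 6) = u 1 := rfl
@[simp] lemma cv6_3 {α : Type*} (x : α) (u : Fin 5 → α) : Matrix.vecCons x u (3 : Fin 6) = u 2 := rfl
@[simp] lemma cv6_4 {α : Type*} (x : α) (u : Fin 5 → α) : Matrix.vecCons x u (4 : Fin 6) = u 3 := rfl
@[simp] lemma cv6_5 {α : Type*} (x : α) (u : Fin 5 → α) : Matrix.vecCons x u (5 : Fin 6) = u 4 := rfl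
@[simp] lemma cv7_1 {α : Type*} (x : α) (u : Fin 6 → α) : Matrix.vecCons x u (1 : Fin 7) = u 0 := rfl
@[simp] lemma cv7_2 {α : Type*} (x : α) (u : Fin 6 → α) : Matrix.vecCons x u (2 : Fin 7) = u 1 := rfl
@[simp] lemma cv7_3 {α : Type*} (x : α) (u : Fin 6 → α) : Matrix.vecCons x u (3 : Fin 7) = u 2 := rfl
@[simp] lemma cv7_4 {α : Type*} (x : α) (u : Fin 6 → α) : Matrix.vecCons x u (4 : Fin 7) = u 3 := rfl
@[simp] lemma cv7_5 {α : Type*} (x : α) (u : Fin 6 → α) : Matrix.vecCons x u (5 : Fin 7) = u 4 := rfl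
@[simp] lemma cv7_6 {α : Type*} (x : α) (u : Fin 6 → α) : Matrix.vecCons x u (6 : Fin 7) = u 5 := rfl

lemma oe0 : oe 0 = ((⟨0,1,0,0⟩ : Quaternion ℝ), 0) := rfl
lemma oe1 : oe 1 = ((⟨0,0,1,0⟩ : Quaternion ℝ), 0) := rfl
lemma oe2 : oe 2 = ((⟨0,0,0,1⟩ : Quaternion ℝ), 0) := rfl
lemma oe3 : oe 3 = (0, 1) := rfl
lemma oe4 : oe 4 = (0, (⟨0,1,0,0⟩ : Quaternion ℝ)) := rfl
lemma oe5 : oe 5 = (0, (⟨0,0,1,0⟩ : Quaternion ℝ)) := rfl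
lemma oe6 : oe 6 = (0, (⟨0,0,0,1⟩ : Quaternion ℝ)) := rfl

lemma oeIm (k : Fin 7) : isIm (oe k) := by fin_cases k <;> rfl

lemma omul_oone_left (z : Octo) : omul oone z = z := by simp [omul, oone]
lemma omul_oone_right (z : Octo) : omul z oone = z := by simp [omul, oone]
lemma omul_zero_left (z : Octo) : omul 0 z = 0 := by simp [omul]
lemma omul_zero_right (z : Octo) : omul z 0 = 0 := by simp [omul]

def omulLm (y : Octo) : Octo →ₗ[ℝ] Octo where
  toFun x := omul x y
  map_add' a b := by
    simp only [omul, Prod.fst_add, Prod.snd_add, add_mul, mul_add, Prod.mk_add_mk,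
      Prod.mk.injEq]
    constructor <;> abel
  map_smul' c a := by
    simp only [omul, Prod.smul_fst, Prod.smul_snd, smul_mul_assoc, mul_smul_comm,
      Prod.smul_mk, RingHom.id_apply, smul_sub, smul_add]

def omulRm (x : Octo) : Octo →ₗ[ℝ] Octo where
  toFun y := omul x y
  map_add' a b := by
    simp only [omul, Prod.fst_add, Prod.snd_add, add_mul, mul_add, star_add, Prod.mk_add_mk,
      Prod.mk.injEq]
    constructor <;> abel
  map_smul' c a := by
    simp only [omul, Prod.smul_fst, Prod.smul_snd, Quaternion.star_smul, star_trivial,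
      smul_mul_assoc, mul_smul_comm, Prod.smul_mk, RingHom.id_apply, smul_sub, smul_add]

@[simp] lemma omulLm_apply (y x : Octo) : omulLm y x = omul x y := rfl
@[simp] lemma omulRm_apply (x y : Octo) : omulRm x y = omul x y := rfl

lemma decomp (x : Octo) : x = oRe x • oone + ∑ k, oinner x (oe k) • oe k := by
  ext <;>
    simp [Fin.sum_univ_seven, oe0, oe1, oe2, oe3, oe4, oe5, oe6, oone, oRe, oinner,
      qre_mul]

lemma omul_oe_0_0 : omul (oe 0) (oe 0) = -(oone) := by
  ext <;> simp [omul, oone, oe0, oe1, oe2, oe3, oe4, oe5, oe6,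
    qre_mul, qimI_mul, qimJ_mul, qimK_mul]

lemma omul_oe_0_1 : omul (oe 0) (oe 1) = oe 2 := by
  ext <;> simp [omul, oone, oe0, oe1, oe2, oe3, oe4, oe5, oe6,
    qre_mul, qimI_mul, qimJ_mul, qimK_mul]

lemma omul_oe_0_2 : omul (oe 0) (oe 2) = -(oe 1) := by
  ext <;> simp [omul, oone, oe0, oe1, oe2, oe3, oe4, oe5, oe6,
    qre_mul, qimI_mul, qimJ_mul, qimK_mul]

lemma omul_oe_0_3 : omul (oe 0) (oe 3) = oe 4 := by
  ext <;> simp [omul, oone, oe0, oe1, oe2, oe3, oe4, oe5, oe6,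
    qre_mul, qimI_mul, qimJ_mul, qimK_mul]

lemma omul_oe_0_4 : omul (oe 0) (oe 4) = -(oe 3) := by
  ext <;> simp [omul, oone, oe0, oe1, oe2, oe3, oe4, oe5, oe6,
    qre_mul, qimI_mul, qimJ_mul, qimK_mul]

lemma omul_oe_0_5 : omul (oe 0) (oe 5) = -(oe 6) := by
  ext <;> simp [omul, oone, oe0, oe1, oe2, oe3, oe4, oe5, oe6,
    qre_mul, qimI_mul, qimJ_mul, qimK_mul]

lemma omul_oe_0_6 : omul (oe 0) (oe 6) = oe 5 := by
  ext <;> simp [omul, oone, oe0, oe1, oe2, oe3, oe4, oe5, oe6,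
    qre_mul, qimI_mul, qimJ_mul, qimK_mul]

lemma omul_oe_1_0 : omul (oe 1) (oe 0) = -(oe 2) := by
  ext <;> simp [omul, oone, oe0, oe1, oe2, oe3, oe4, oe5, oe6,
    qre_mul, qimI_mul, qimJ_mul, qimK_mul]

lemma omul_oe_1_1 : omul (oe 1) (oe 1) = -(oone) := by
  ext <;> simp [omul, oone, oe0, oe1, oe2, oe3, oe4, oe5, oe6,
    qre_mul, qimI_mul, qimJ_mul, qimK_mul]

lemma omul_oe_1_2 : omul (oe 1) (oe 2) = oe 0 := by
  ext <;> simp [omul, oone, oe0, oe1, oe2, oe3, oe4, oe5, oe6,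
    qre_mul, qimI_mul, qimJ_mul, qimK_mul]

lemma omul_oe_1_3 : omul (oe 1) (oe 3) = oe 5 := by
  ext <;> simp [omul, oone, oe0, oe1, oe2, oe3, oe4, oe5, oe6,
    qre_mul, qimI_mul, qimJ_mul, qimK_mul]

lemma omul_oe_1_4 : omul (oe 1) (oe 4) = oe 6 := by
  ext <;> simp [omul, oone, oe0, oe1, oe2, oe3, oe4, oe5, oe6,
    qre_mul, qimI_mul, qimJ_mul, qimK_mul]

lemma omul_oe_1_5 : omul (oe 1) (oe 5) = -(oe 3) := by
  ext <;> simp [omul, oone, oe0, oe1, oe2, oe3, oe4, oe5, oe6,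
    qre_mul, qimI_mul, qimJ_mul, qimK_mul]

lemma omul_oe_1_6 : omul (oe 1) (oe 6) = -(oe 4) := by
  ext <;> simp [omul, oone, oe0, oe1, oe2, oe3, oe4, oe5, oe6,
    qre_mul, qimI_mul, qimJ_mul, qimK_mul]

lemma omul_oe_2_0 : omul (oe 2) (oe 0) = oe 1 := by
  ext <;> simp [omul, oone, oe0, oe1, oe2, oe3, oe4, oe5, oe6,
    qre_mul, qimI_mul, qimJ_mul, qimK_mul]

lemma omul_oe_2_1 : omul (oe 2) (oe 1) = -(oe 0) := by
  ext <;> simp [omul, oone, oe0, oe1, oe2, oe3, oe4, oe5, oe6,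
    qre_mul, qimI_mul, qimJ_mul, qimK_mul]

lemma omul_oe_2_2 : omul (oe 2) (oe 2) = -(oone) := by
  ext <;> simp [omul, oone, oe0, oe1, oe2, oe3, oe4, oe5, oe6,
    qre_mul, qimI_mul, qimJ_mul, qimK_mul]

lemma omul_oe_2_3 : omul (oe 2) (oe 3) = oe 6 := by
  ext <;> simp [omul, oone, oe0, oe1, oe2, oe3, oe4, oe5, oe6,
    qre_mul, qimI_mul, qimJ_mul, qimK_mul]

lemma omul_oe_2_4 : omul (oe 2) (oe 4) = -(oe 5) := by
  ext <;> simp [omul, oone, oe0, oe1, oe2, oe3, oe4, oe5, oe6,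
    qre_mul, qimI_mul, qimJ_mul, qimK_mul]

lemma omul_oe_2_5 : omul (oe 2) (oe 5) = oe 4 := by
  ext <;> simp [omul, oone, oe0, oe1, oe2, oe3, oe4, oe5, oe6,
    qre_mul, qimI_mul, qimJ_mul, qimK_mul]

lemma omul_oe_2_6 : omul (oe 2) (oe 6) = -(oe 3) := by
  ext <;> simp [omul, oone, oe0, oe1, oe2, oe3, oe4, oe5, oe6,
    qre_mul, qimI_mul, qimJ_mul, qimK_mul]

lemma omul_oe_3_0 : omul (oe 3) (oe 0) = -(oe 4) := by
  ext <;> simp [omul, oone, oe0, oe1, oe2, oe3, oe4, oe5, oe6,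
    qre_mul, qimI_mul, qimJ_mul, qimK_mul]

lemma omul_oe_3_1 : omul (oe 3) (oe 1) = -(oe 5) := by
  ext <;> simp [omul, oone, oe0, oe1, oe2, oe3, oe4, oe5, oe6,
    qre_mul, qimI_mul, qimJ_mul, qimK_mul]

lemma omul_oe_3_2 : omul (oe 3) (oe 2) = -(oe 6) := by
  ext <;> simp [omul, oone, oe0, oe1, oe2, oe3, oe4, oe5, oe6,
    qre_mul, qimI_mul, qimJ_mul, qimK_mul]

lemma omul_oe_3_3 : omul (oe 3) (oe 3) = -(oone) := by
  ext <;> simp [omul, oone, oe0, oe1, oe2, oe3, oe4, oe5, oe6,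
    qre_mul, qimI_mul, qimJ_mul, qimK_mul]

lemma omul_oe_3_4 : omul (oe 3) (oe 4) = oe 0 := by
  ext <;> simp [omul, oone, oe0, oe1, oe2, oe3, oe4, oe5, oe6,
    qre_mul, qimI_mul, qimJ_mul, qimK_mul]

lemma omul_oe_3_5 : omul (oe 3) (oe 5) = oe 1 := by
  ext <;> simp [omul, oone, oe0, oe1, oe2, oe3, oe4, oe5, oe6,
    qre_mul, qimI_mul, qimJ_mul, qimK_mul]

lemma omul_oe_3_6 : omul (oe 3) (oe 6) = oe 2 := by
  ext <;> simp [omul, oone, oe0, oe1, oe2, oe3, oe4, oe5, oe6,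
    qre_mul, qimI_mul, qimJ_mul, qimK_mul]

lemma omul_oe_4_0 : omul (oe 4) (oe 0) = oe 3 := by
  ext <;> simp [omul, oone, oe0, oe1, oe2, oe3, oe4, oe5, oe6,
    qre_mul, qimI_mul, qimJ_mul, qimK_mul]

lemma omul_oe_4_1 : omul (oe 4) (oe 1) = -(oe 6) := by
  ext <;> simp [omul, oone, oe0, oe1, oe2, oe3, oe4, oe5, oe6,
    qre_mul, qimI_mul, qimJ_mul, qimK_mul]

lemma omul_oe_4_2 : omul (oe 4) (oe 2) = oe 5 := by
  ext <;> simp [omul, oone, oe0, oe1, oe2, oe3, oe4, oe5, oe6,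
    qre_mul, qimI_mul, qimJ_mul, qimK_mul]

lemma omul_oe_4_3 : omul (oe 4) (oe 3) = -(oe 0) := by
  ext <;> simp [omul, oone, oe0, oe1, oe2, oe3, oe4, oe5, oe6,
    qre_mul, qimI_mul, qimJ_mul, qimK_mul]

lemma omul_oe_4_4 : omul (oe 4) (oe 4) = -(oone) := by
  ext <;> simp [omul, oone, oe0, oe1, oe2, oe3, oe4, oe5, oe6,
    qre_mul, qimI_mul, qimJ_mul, qimK_mul]

lemma omul_oe_4_5 : omul (oe 4) (oe 5) = -(oe 2) := by
  ext <;> simp [omul, oone, oe0, oe1, oe2, oe3, oe4, oe5, oe6,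
    qre_mul, qimI_mul, qimJ_mul, qimK_mul]

lemma omul_oe_4_6 : omul (oe 4) (oe 6) = oe 1 := by
  ext <;> simp [omul, oone, oe0, oe1, oe2, oe3, oe4, oe5, oe6,
    qre_mul, qimI_mul, qimJ_mul, qimK_mul]

lemma omul_oe_5_0 : omul (oe 5) (oe 0) = oe 6 := by
  ext <;> simp [omul, oone, oe0, oe1, oe2, oe3, oe4, oe5, oe6,
    qre_mul, qimI_mul, qimJ_mul, qimK_mul]

lemma omul_oe_5_1 : omul (oe 5) (oe 1) = oe 3 := by
  ext <;> simp [omul, oone, oe0, oe1, oe2, oe3, oe4, oe5, oe6,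
    qre_mul, qimI_mul, qimJ_mul, qimK_mul]

lemma omul_oe_5_2 : omul (oe 5) (oe 2) = -(oe 4) := by
  ext <;> simp [omul, oone, oe0, oe1, oe2, oe3, oe4, oe5, oe6,
    qre_mul, qimI_mul, qimJ_mul, qimK_mul]

lemma omul_oe_5_3 : omul (oe 5) (oe 3) = -(oe 1) := by
  ext <;> simp [omul, oone, oe0, oe1, oe2, oe3, oe4, oe5, oe6,
    qre_mul, qimI_mul, qimJ_mul, qimK_mul]

lemma omul_oe_5_4 : omul (oe 5) (oe 4) = oe 2 := by
  ext <;> simp [omul, oone, oe0, oe1, oe2, oe3, oe4, oe5, oe6,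
    qre_mul, qimI_mul, qimJ_mul, qimK_mul]

lemma omul_oe_5_5 : omul (oe 5) (oe 5) = -(oone) := by
  ext <;> simp [omul, oone, oe0, oe1, oe2, oe3, oe4, oe5, oe6,
    qre_mul, qimI_mul, qimJ_mul, qimK_mul]

lemma omul_oe_5_6 : omul (oe 5) (oe 6) = -(oe 0) := by
  ext <;> simp [omul, oone, oe0, oe1, oe2, oe3, oe4, oe5, oe6,
    qre_mul, qimI_mul, qimJ_mul, qimK_mul]

lemma omul_oe_6_0 : omul (oe 6) (oe 0) = -(oe 5) := by
  ext <;> simp [omul, oone, oe0, oe1, oe2, oe3, oe4, oe5, oe6,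
    qre_mul, qimI_mul, qimJ_mul, qimK_mul]

lemma omul_oe_6_1 : omul (oe 6) (oe 1) = oe 4 := by
  ext <;> simp [omul, oone, oe0, oe1, oe2, oe3, oe4, oe5, oe6,
    qre_mul, qimI_mul, qimJ_mul, qimK_mul]

lemma omul_oe_6_2 : omul (oe 6) (oe 2) = oe 3 := by
  ext <;> simp [omul, oone, oe0, oe1, oe2, oe3, oe4, oe5, oe6,
    qre_mul, qimI_mul, qimJ_mul, qimK_mul]

lemma omul_oe_6_3 : omul (oe 6) (oe 3) = -(oe 2) := by
  ext <;> simp [omul, oone, oe0, oe1, oe2, oe3, oe4, oe5, oe6,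
    qre_mul, qimI_mul, qimJ_mul, qimK_mul]

lemma omul_oe_6_4 : omul (oe 6) (oe 4) = -(oe 1) := by
  ext <;> simp [omul, oone, oe0, oe1, oe2, oe3, oe4, oe5, oe6,
    qre_mul, qimI_mul, qimJ_mul, qimK_mul]

lemma omul_oe_6_5 : omul (oe 6) (oe 5) = oe 0 := by
  ext <;> simp [omul, oone, oe0, oe1, oe2, oe3, oe4, oe5, oe6,
    qre_mul, qimI_mul, qimJ_mul, qimK_mul]

lemma omul_oe_6_6 : omul (oe 6) (oe 6) = -(oone) := by
  ext <;> simp [omul, oone, oe0, oe1, oe2, oe3, oe4, oe5, oe6,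
    qre_mul, qimI_mul, qimJ_mul, qimK_mul]


lemma deriv_extend (A : Octo →ₗ[ℝ] Octo) (hA1 : A oone = 0)
    (hb : ∀ k l : Fin 7, A (omul (oe k) (oe l))
      = omul (A (oe k)) (oe l) + omul (oe k) (A (oe l))) :
    ∀ x y : Octo, A (omul x y) = omul (A x) y + omul x (A y) := by
  have step1 : ∀ (k : Fin 7) (z : Octo),
      A (omul (oe k) z) = omul (A (oe k)) z + omul (oe k) (A z) := by
    intro k z
    set w := oe k with hw
    set E : Octo →ₗ[ℝ] Octo := A ∘ₗ omulRm w - omulRm (A w) - omulRm w ∘ₗ A with hEdef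
    have hE : ∀ u, E u = A (omul w u) - omul (A w) u - omul w (A u) := fun u => rfl
    have hEoe : ∀ l, E (oe l) = 0 := by intro l; rw [hE, hb k l]; abel
    have hEone : E oone = 0 := by
      rw [hE, omul_oone_right, omul_oone_right, hA1, omul_zero_right]; abel
    have hz : E z = 0 := by
      conv_lhs => rw [decomp z]
      rw [map_add, map_smul, map_sum, hEone, smul_zero, zero_add]
      simp only [map_smul, hEoe, smul_zero, Finset.sum_const_zero]
    rw [hE z, sub_sub, sub_eq_zero] at hz
    exact hz
  intro x y
  set F : Octo →ₗ[ℝ] Octo := A ∘ₗ omulLm y - omulLm y ∘ₗ A - omulLm (A y) with hFdef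
  have hF : ∀ u, F u = A (omul u y) - omul (A u) y - omul u (A y) := fun u => rfl
  have hFoe : ∀ k, F (oe k) = 0 := by intro k; rw [hF, step1 k y]; abel
  have hFone : F oone = 0 := by
    rw [hF, omul_oone_left, omul_oone_left, hA1, omul_zero_left]; abel
  have hx : F x = 0 := by
    conv_lhs => rw [decomp x]
    rw [map_add, map_smul, map_sum, hFone, smul_zero, zero_add]
    simp only [map_smul, hFoe, smul_zero, Finset.sum_const_zero]
  rw [hF x, sub_sub, sub_eq_zero] at hx
  exact hx

end AuxiliaryForStatement12


set_option maxHeartbeats 16000000 in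
lemma basis_deriv (A : Octo →ₗ[ℝ] Octo) (hA1 : A oone = 0)
    (x2 x3 x4 x5 x6 x7 y3 y4 y5 y6 y7 z5 z6 z7 : ℝ)
    (h0 : A (oe 0) = ((⟨0,0,x2,x3⟩ : Quaternion ℝ), (⟨x4,x5,x6,x7⟩ : Quaternion ℝ)))
    (h1 : A (oe 1) = ((⟨0,-x2,0,y3⟩ : Quaternion ℝ), (⟨y4,y5,y6,y7⟩ : Quaternion ℝ)))
    (h2 : A (oe 2) = ((⟨0,-x3,-y3,0⟩ : Quaternion ℝ), (⟨x6-y5,x7+y4,-x4+y7,-x5-y6⟩ : Quaternion ℝ)))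
    (h3 : A (oe 3) = ((⟨0,-x4,-y4,-(x6-y5)⟩ : Quaternion ℝ), (⟨0,z5,z6,z7⟩ : Quaternion ℝ)))
    (h4 : A (oe 4) = ((⟨0,-x5,-y5,-(x7+y4)⟩ : Quaternion ℝ), (⟨-z5,0,x2+z7,x3-z6⟩ : Quaternion ℝ)))
    (h5 : A (oe 5) = ((⟨0,-x6,-y6,-(-x4+y7)⟩ : Quaternion ℝ), (⟨-z6,-(x2+z7),0,y3+z5⟩ : Quaternion ℝ)))
    (h6 : A (oe 6) = ((⟨0,-x7,-y7,-(-x5-y6)⟩ : Quaternion ℝ), (⟨-z7,-(x3-z6),-(y3+z5),0⟩ : Quaternion ℝ))) :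
    ∀ k l : Fin 7, A (omul (oe k) (oe l))
      = omul (A (oe k)) (oe l) + omul (oe k) (A (oe l)) := by

  have hb00 : A (omul (oe 0) (oe 0)) = omul (A (oe 0)) (oe 0) + omul (oe 0) (A (oe 0)) := by
    simp only [omul_oe_0_0, map_neg, hA1, neg_zero, h0]
    ext <;>
      simp [omul, oone, oe0, oe1, oe2, oe3, oe4, oe5, oe6, qre_mul,
        qimI_mul, qimJ_mul, qimK_mul] <;>
      try ring
  have hb01 : A (omul (oe 0) (oe 1)) = omul (A (oe 0)) (oe 1) + omul (oe 0) (A (oe 1)) := by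
    simp only [omul_oe_0_1, map_neg, hA1, neg_zero, h2, h0, h1]
    ext <;>
      simp [omul, oone, oe0, oe1, oe2, oe3, oe4, oe5, oe6, qre_mul,
        qimI_mul, qimJ_mul, qimK_mul] <;>
      try ring
  have hb02 : A (omul (oe 0) (oe 2)) = omul (A (oe 0)) (oe 2) + omul (oe 0) (A (oe 2)) := by
    simp only [omul_oe_0_2, map_neg, hA1, neg_zero, h1, h0, h2]
    ext <;>
      simp [omul, oone, oe0, oe1, oe2, oe3, oe4, oe5, oe6, qre_mul,
        qimI_mul, qimJ_mul, qimK_mul] <;>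
      try ring
  have hb03 : A (omul (oe 0) (oe 3)) = omul (A (oe 0)) (oe 3) + omul (oe 0) (A (oe 3)) := by
    simp only [omul_oe_0_3, map_neg, hA1, neg_zero, h4, h0, h3]
    ext <;>
      simp [omul, oone, oe0, oe1, oe2, oe3, oe4, oe5, oe6, qre_mul,
        qimI_mul, qimJ_mul, qimK_mul] <;>
      try ring
  have hb04 : A (omul (oe 0) (oe 4)) = omul (A (oe 0)) (oe 4) + omul (oe 0) (A (oe 4)) := by
    simp only [omul_oe_0_4, map_neg, hA1, neg_zero, h3, h0, h4]
    ext <;>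
      simp [omul, oone, oe0, oe1, oe2, oe3, oe4, oe5, oe6, qre_mul,
        qimI_mul, qimJ_mul, qimK_mul] <;>
      try ring
  have hb05 : A (omul (oe 0) (oe 5)) = omul (A (oe 0)) (oe 5) + omul (oe 0) (A (oe 5)) := by
    simp only [omul_oe_0_5, map_neg, hA1, neg_zero, h6, h0, h5]
    ext <;>
      simp [omul, oone, oe0, oe1, oe2, oe3, oe4, oe5, oe6, qre_mul,
        qimI_mul, qimJ_mul, qimK_mul] <;>
      try ring
  have hb06 : A (omul (oe 0) (oe 6)) = omul (A (oe 0)) (oe 6) + omul (oe 0) (A (oe 6)) := by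
    simp only [omul_oe_0_6, map_neg, hA1, neg_zero, h5, h0, h6]
    ext <;>
      simp [omul, oone, oe0, oe1, oe2, oe3, oe4, oe5, oe6, qre_mul,
        qimI_mul, qimJ_mul, qimK_mul] <;>
      try ring
  have hb10 : A (omul (oe 1) (oe 0)) = omul (A (oe 1)) (oe 0) + omul (oe 1) (A (oe 0)) := by
    simp only [omul_oe_1_0, map_neg, hA1, neg_zero, h2, h1, h0]
    ext <;>
      simp [omul, oone, oe0, oe1, oe2, oe3, oe4, oe5, oe6, qre_mul,
        qimI_mul, qimJ_mul, qimK_mul] <;>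
      try ring
  have hb11 : A (omul (oe 1) (oe 1)) = omul (A (oe 1)) (oe 1) + omul (oe 1) (A (oe 1)) := by
    simp only [omul_oe_1_1, map_neg, hA1, neg_zero, h1]
    ext <;>
      simp [omul, oone, oe0, oe1, oe2, oe3, oe4, oe5, oe6, qre_mul,
        qimI_mul, qimJ_mul, qimK_mul] <;>
      try ring
  have hb12 : A (omul (oe 1) (oe 2)) = omul (A (oe 1)) (oe 2) + omul (oe 1) (A (oe 2)) := by
    simp only [omul_oe_1_2, map_neg, hA1, neg_zero, h0, h1, h2]
    ext <;>
      simp [omul, oone, oe0, oe1, oe2, oe3, oe4, oe5, oe6, qre_mul,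
        qimI_mul, qimJ_mul, qimK_mul] <;>
      try ring
  have hb13 : A (omul (oe 1) (oe 3)) = omul (A (oe 1)) (oe 3) + omul (oe 1) (A (oe 3)) := by
    simp only [omul_oe_1_3, map_neg, hA1, neg_zero, h5, h1, h3]
    ext <;>
      simp [omul, oone, oe0, oe1, oe2, oe3, oe4, oe5, oe6, qre_mul,
        qimI_mul, qimJ_mul, qimK_mul] <;>
      try ring
  have hb14 : A (omul (oe 1) (oe 4)) = omul (A (oe 1)) (oe 4) + omul (oe 1) (A (oe 4)) := by
    simp only [omul_oe_1_4, map_neg, hA1, neg_zero, h6, h1, h4]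
    ext <;>
      simp [omul, oone, oe0, oe1, oe2, oe3, oe4, oe5, oe6, qre_mul,
        qimI_mul, qimJ_mul, qimK_mul] <;>
      try ring
  have hb15 : A (omul (oe 1) (oe 5)) = omul (A (oe 1)) (oe 5) + omul (oe 1) (A (oe 5)) := by
    simp only [omul_oe_1_5, map_neg, hA1, neg_zero, h3, h1, h5]
    ext <;>
      simp [omul, oone, oe0, oe1, oe2, oe3, oe4, oe5, oe6, qre_mul,
        qimI_mul, qimJ_mul, qimK_mul] <;>
      try ring
  have hb16 : A (omul (oe 1) (oe 6)) = omul (A (oe 1)) (oe 6) + omul (oe 1) (A (oe 6)) := by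
    simp only [omul_oe_1_6, map_neg, hA1, neg_zero, h4, h1, h6]
    ext <;>
      simp [omul, oone, oe0, oe1, oe2, oe3, oe4, oe5, oe6, qre_mul,
        qimI_mul, qimJ_mul, qimK_mul] <;>
      try ring
  have hb20 : A (omul (oe 2) (oe 0)) = omul (A (oe 2)) (oe 0) + omul (oe 2) (A (oe 0)) := by
    simp only [omul_oe_2_0, map_neg, hA1, neg_zero, h1, h2, h0]
    ext <;>
      simp [omul, oone, oe0, oe1, oe2, oe3, oe4, oe5, oe6, qre_mul,
        qimI_mul, qimJ_mul, qimK_mul] <;>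
      try ring
  have hb21 : A (omul (oe 2) (oe 1)) = omul (A (oe 2)) (oe 1) + omul (oe 2) (A (oe 1)) := by
    simp only [omul_oe_2_1, map_neg, hA1, neg_zero, h0, h2, h1]
    ext <;>
      simp [omul, oone, oe0, oe1, oe2, oe3, oe4, oe5, oe6, qre_mul,
        qimI_mul, qimJ_mul, qimK_mul] <;>
      try ring
  have hb22 : A (omul (oe 2) (oe 2)) = omul (A (oe 2)) (oe 2) + omul (oe 2) (A (oe 2)) := by
    simp only [omul_oe_2_2, map_neg, hA1, neg_zero, h2]
    ext <;>
      simp [omul, oone, oe0, oe1, oe2, oe3, oe4, oe5, oe6, qre_mul,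
        qimI_mul, qimJ_mul, qimK_mul] <;>
      try ring
  have hb23 : A (omul (oe 2) (oe 3)) = omul (A (oe 2)) (oe 3) + omul (oe 2) (A (oe 3)) := by
    simp only [omul_oe_2_3, map_neg, hA1, neg_zero, h6, h2, h3]
    ext <;>
      simp [omul, oone, oe0, oe1, oe2, oe3, oe4, oe5, oe6, qre_mul,
        qimI_mul, qimJ_mul, qimK_mul] <;>
      try ring
  have hb24 : A (omul (oe 2) (oe 4)) = omul (A (oe 2)) (oe 4) + omul (oe 2) (A (oe 4)) := by
    simp only [omul_oe_2_4, map_neg, hA1, neg_zero, h5, h2, h4]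
    ext <;>
      simp [omul, oone, oe0, oe1, oe2, oe3, oe4, oe5, oe6, qre_mul,
        qimI_mul, qimJ_mul, qimK_mul] <;>
      try ring
  have hb25 : A (omul (oe 2) (oe 5)) = omul (A (oe 2)) (oe 5) + omul (oe 2) (A (oe 5)) := by
    simp only [omul_oe_2_5, map_neg, hA1, neg_zero, h4, h2, h5]
    ext <;>
      simp [omul, oone, oe0, oe1, oe2, oe3, oe4, oe5, oe6, qre_mul,
        qimI_mul, qimJ_mul, qimK_mul] <;>
      try ring
  have hb26 : A (omul (oe 2) (oe 6)) = omul (A (oe 2)) (oe 6) + omul (oe 2) (A (oe 6)) := by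
    simp only [omul_oe_2_6, map_neg, hA1, neg_zero, h3, h2, h6]
    ext <;>
      simp [omul, oone, oe0, oe1, oe2, oe3, oe4, oe5, oe6, qre_mul,
        qimI_mul, qimJ_mul, qimK_mul] <;>
      try ring
  have hb30 : A (omul (oe 3) (oe 0)) = omul (A (oe 3)) (oe 0) + omul (oe 3) (A (oe 0)) := by
    simp only [omul_oe_3_0, map_neg, hA1, neg_zero, h4, h3, h0]
    ext <;>
      simp [omul, oone, oe0, oe1, oe2, oe3, oe4, oe5, oe6, qre_mul,
        qimI_mul, qimJ_mul, qimK_mul] <;>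
      try ring
  have hb31 : A (omul (oe 3) (oe 1)) = omul (A (oe 3)) (oe 1) + omul (oe 3) (A (oe 1)) := by
    simp only [omul_oe_3_1, map_neg, hA1, neg_zero, h5, h3, h1]
    ext <;>
      simp [omul, oone, oe0, oe1, oe2, oe3, oe4, oe5, oe6, qre_mul,
        qimI_mul, qimJ_mul, qimK_mul] <;>
      try ring
  have hb32 : A (omul (oe 3) (oe 2)) = omul (A (oe 3)) (oe 2) + omul (oe 3) (A (oe 2)) := by
    simp only [omul_oe_3_2, map_neg, hA1, neg_zero, h6, h3, h2]
    ext <;>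
      simp [omul, oone, oe0, oe1, oe2, oe3, oe4, oe5, oe6, qre_mul,
        qimI_mul, qimJ_mul, qimK_mul] <;>
      try ring
  have hb33 : A (omul (oe 3) (oe 3)) = omul (A (oe 3)) (oe 3) + omul (oe 3) (A (oe 3)) := by
    simp only [omul_oe_3_3, map_neg, hA1, neg_zero, h3]
    ext <;>
      simp [omul, oone, oe0, oe1, oe2, oe3, oe4, oe5, oe6, qre_mul,
        qimI_mul, qimJ_mul, qimK_mul] <;>
      try ring
  have hb34 : A (omul (oe 3) (oe 4)) = omul (A (oe 3)) (oe 4) + omul (oe 3) (A (oe 4)) := by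
    simp only [omul_oe_3_4, map_neg, hA1, neg_zero, h0, h3, h4]
    ext <;>
      simp [omul, oone, oe0, oe1, oe2, oe3, oe4, oe5, oe6, qre_mul,
        qimI_mul, qimJ_mul, qimK_mul] <;>
      try ring
  have hb35 : A (omul (oe 3) (oe 5)) = omul (A (oe 3)) (oe 5) + omul (oe 3) (A (oe 5)) := by
    simp only [omul_oe_3_5, map_neg, hA1, neg_zero, h1, h3, h5]
    ext <;>
      simp [omul, oone, oe0, oe1, oe2, oe3, oe4, oe5, oe6, qre_mul,
        qimI_mul, qimJ_mul, qimK_mul] <;>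
      try ring
  have hb36 : A (omul (oe 3) (oe 6)) = omul (A (oe 3)) (oe 6) + omul (oe 3) (A (oe 6)) := by
    simp only [omul_oe_3_6, map_neg, hA1, neg_zero, h2, h3, h6]
    ext <;>
      simp [omul, oone, oe0, oe1, oe2, oe3, oe4, oe5, oe6, qre_mul,
        qimI_mul, qimJ_mul, qimK_mul] <;>
      try ring
  have hb40 : A (omul (oe 4) (oe 0)) = omul (A (oe 4)) (oe 0) + omul (oe 4) (A (oe 0)) := by
    simp only [omul_oe_4_0, map_neg, hA1, neg_zero, h3, h4, h0]
    ext <;>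
      simp [omul, oone, oe0, oe1, oe2, oe3, oe4, oe5, oe6, qre_mul,
        qimI_mul, qimJ_mul, qimK_mul] <;>
      try ring
  have hb41 : A (omul (oe 4) (oe 1)) = omul (A (oe 4)) (oe 1) + omul (oe 4) (A (oe 1)) := by
    simp only [omul_oe_4_1, map_neg, hA1, neg_zero, h6, h4, h1]
    ext <;>
      simp [omul, oone, oe0, oe1, oe2, oe3, oe4, oe5, oe6, qre_mul,
        qimI_mul, qimJ_mul, qimK_mul] <;>
      try ring
  have hb42 : A (omul (oe 4) (oe 2)) = omul (A (oe 4)) (oe 2) + omul (oe 4) (A (oe 2)) := by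
    simp only [omul_oe_4_2, map_neg, hA1, neg_zero, h5, h4, h2]
    ext <;>
      simp [omul, oone, oe0, oe1, oe2, oe3, oe4, oe5, oe6, qre_mul,
        qimI_mul, qimJ_mul, qimK_mul] <;>
      try ring
  have hb43 : A (omul (oe 4) (oe 3)) = omul (A (oe 4)) (oe 3) + omul (oe 4) (A (oe 3)) := by
    simp only [omul_oe_4_3, map_neg, hA1, neg_zero, h0, h4, h3]
    ext <;>
      simp [omul, oone, oe0, oe1, oe2, oe3, oe4, oe5, oe6, qre_mul,
        qimI_mul, qimJ_mul, qimK_mul] <;>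
      try ring
  have hb44 : A (omul (oe 4) (oe 4)) = omul (A (oe 4)) (oe 4) + omul (oe 4) (A (oe 4)) := by
    simp only [omul_oe_4_4, map_neg, hA1, neg_zero, h4]
    ext <;>
      simp [omul, oone, oe0, oe1, oe2, oe3, oe4, oe5, oe6, qre_mul,
        qimI_mul, qimJ_mul, qimK_mul] <;>
      try ring
  have hb45 : A (omul (oe 4) (oe 5)) = omul (A (oe 4)) (oe 5) + omul (oe 4) (A (oe 5)) := by
    simp only [omul_oe_4_5, map_neg, hA1, neg_zero, h2, h4, h5]
    ext <;>
      simp [omul, oone, oe0, oe1, oe2, oe3, oe4, oe5, oe6, qre_mul,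
        qimI_mul, qimJ_mul, qimK_mul] <;>
      try ring
  have hb46 : A (omul (oe 4) (oe 6)) = omul (A (oe 4)) (oe 6) + omul (oe 4) (A (oe 6)) := by
    simp only [omul_oe_4_6, map_neg, hA1, neg_zero, h1, h4, h6]
    ext <;>
      simp [omul, oone, oe0, oe1, oe2, oe3, oe4, oe5, oe6, qre_mul,
        qimI_mul, qimJ_mul, qimK_mul] <;>
      try ring
  have hb50 : A (omul (oe 5) (oe 0)) = omul (A (oe 5)) (oe 0) + omul (oe 5) (A (oe 0)) := by
    simp only [omul_oe_5_0, map_neg, hA1, neg_zero, h6, h5, h0]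
    ext <;>
      simp [omul, oone, oe0, oe1, oe2, oe3, oe4, oe5, oe6, qre_mul,
        qimI_mul, qimJ_mul, qimK_mul] <;>
      try ring
  have hb51 : A (omul (oe 5) (oe 1)) = omul (A (oe 5)) (oe 1) + omul (oe 5) (A (oe 1)) := by
    simp only [omul_oe_5_1, map_neg, hA1, neg_zero, h3, h5, h1]
    ext <;>
      simp [omul, oone, oe0, oe1, oe2, oe3, oe4, oe5, oe6, qre_mul,
        qimI_mul, qimJ_mul, qimK_mul] <;>
      try ring
  have hb52 : A (omul (oe 5) (oe 2)) = omul (A (oe 5)) (oe 2) + omul (oe 5) (A (oe 2)) := by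
    simp only [omul_oe_5_2, map_neg, hA1, neg_zero, h4, h5, h2]
    ext <;>
      simp [omul, oone, oe0, oe1, oe2, oe3, oe4, oe5, oe6, qre_mul,
        qimI_mul, qimJ_mul, qimK_mul] <;>
      try ring
  have hb53 : A (omul (oe 5) (oe 3)) = omul (A (oe 5)) (oe 3) + omul (oe 5) (A (oe 3)) := by
    simp only [omul_oe_5_3, map_neg, hA1, neg_zero, h1, h5, h3]
    ext <;>
      simp [omul, oone, oe0, oe1, oe2, oe3, oe4, oe5, oe6, qre_mul,
        qimI_mul, qimJ_mul, qimK_mul] <;>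
      try ring
  have hb54 : A (omul (oe 5) (oe 4)) = omul (A (oe 5)) (oe 4) + omul (oe 5) (A (oe 4)) := by
    simp only [omul_oe_5_4, map_neg, hA1, neg_zero, h2, h5, h4]
    ext <;>
      simp [omul, oone, oe0, oe1, oe2, oe3, oe4, oe5, oe6, qre_mul,
        qimI_mul, qimJ_mul, qimK_mul] <;>
      try ring
  have hb55 : A (omul (oe 5) (oe 5)) = omul (A (oe 5)) (oe 5) + omul (oe 5) (A (oe 5)) := by
    simp only [omul_oe_5_5, map_neg, hA1, neg_zero, h5]
    ext <;>
      simp [omul, oone, oe0, oe1, oe2, oe3, oe4, oe5, oe6, qre_mul,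
        qimI_mul, qimJ_mul, qimK_mul] <;>
      try ring
  have hb56 : A (omul (oe 5) (oe 6)) = omul (A (oe 5)) (oe 6) + omul (oe 5) (A (oe 6)) := by
    simp only [omul_oe_5_6, map_neg, hA1, neg_zero, h0, h5, h6]
    ext <;>
      simp [omul, oone, oe0, oe1, oe2, oe3, oe4, oe5, oe6, qre_mul,
        qimI_mul, qimJ_mul, qimK_mul] <;>
      try ring
  have hb60 : A (omul (oe 6) (oe 0)) = omul (A (oe 6)) (oe 0) + omul (oe 6) (A (oe 0)) := by
    simp only [omul_oe_6_0, map_neg, hA1, neg_zero, h5, h6, h0]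
    ext <;>
      simp [omul, oone, oe0, oe1, oe2, oe3, oe4, oe5, oe6, qre_mul,
        qimI_mul, qimJ_mul, qimK_mul] <;>
      try ring
  have hb61 : A (omul (oe 6) (oe 1)) = omul (A (oe 6)) (oe 1) + omul (oe 6) (A (oe 1)) := by
    simp only [omul_oe_6_1, map_neg, hA1, neg_zero, h4, h6, h1]
    ext <;>
      simp [omul, oone, oe0, oe1, oe2, oe3, oe4, oe5, oe6, qre_mul,
        qimI_mul, qimJ_mul, qimK_mul] <;>
      try ring
  have hb62 : A (omul (oe 6) (oe 2)) = omul (A (oe 6)) (oe 2) + omul (oe 6) (A (oe 2)) := by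
    simp only [omul_oe_6_2, map_neg, hA1, neg_zero, h3, h6, h2]
    ext <;>
      simp [omul, oone, oe0, oe1, oe2, oe3, oe4, oe5, oe6, qre_mul,
        qimI_mul, qimJ_mul, qimK_mul] <;>
      try ring
  have hb63 : A (omul (oe 6) (oe 3)) = omul (A (oe 6)) (oe 3) + omul (oe 6) (A (oe 3)) := by
    simp only [omul_oe_6_3, map_neg, hA1, neg_zero, h2, h6, h3]
    ext <;>
      simp [omul, oone, oe0, oe1, oe2, oe3, oe4, oe5, oe6, qre_mul,
        qimI_mul, qimJ_mul, qimK_mul] <;>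
      try ring
  have hb64 : A (omul (oe 6) (oe 4)) = omul (A (oe 6)) (oe 4) + omul (oe 6) (A (oe 4)) := by
    simp only [omul_oe_6_4, map_neg, hA1, neg_zero, h1, h6, h4]
    ext <;>
      simp [omul, oone, oe0, oe1, oe2, oe3, oe4, oe5, oe6, qre_mul,
        qimI_mul, qimJ_mul, qimK_mul] <;>
      try ring
  have hb65 : A (omul (oe 6) (oe 5)) = omul (A (oe 6)) (oe 5) + omul (oe 6) (A (oe 5)) := by
    simp only [omul_oe_6_5, map_neg, hA1, neg_zero, h0, h6, h5]
    ext <;>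
      simp [omul, oone, oe0, oe1, oe2, oe3, oe4, oe5, oe6, qre_mul,
        qimI_mul, qimJ_mul, qimK_mul] <;>
      try ring
  have hb66 : A (omul (oe 6) (oe 6)) = omul (A (oe 6)) (oe 6) + omul (oe 6) (A (oe 6)) := by
    simp only [omul_oe_6_6, map_neg, hA1, neg_zero, h6]
    ext <;>
      simp [omul, oone, oe0, oe1, oe2, oe3, oe4, oe5, oe6, qre_mul,
        qimI_mul, qimJ_mul, qimK_mul] <;>
      try ring
  intro k l
  fin_cases k <;> fin_cases l
  exacts [hb00, hb01, hb02, hb03, hb04, hb05, hb06, hb10, hb11, hb12, hb13, hb14, hb15, hb16, hb20, hb21, hb22, hb23, hb24, hb25, hb26, hb30, hb31, hb32, hb33, hb34, hb35, hb36, hb40, hb41, hb42, hb43, hb44, hb45, hb46, hb50, hb51, hb52, hb53, hb54, hb55, hb56, hb60, hb61, hb62, hb63, hb64, hb65, hb66]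


set_option maxHeartbeats 4000000 in
theorem statement12 (A : Octo →ₗ[ℝ] Octo)
    (hA1 : A oone = 0) (hAIm : ∀ x : Octo, isIm x → isIm (A x)) :
    (Matrix.transpose (matOf A) = -(matOf A) ∧
      (∀ x y : Octo, A (omul x y) = omul (A x) y + omul x (A y))) ↔
    (∃ x2 x3 x4 x5 x6 x7 y3 y4 y5 y6 y7 z5 z6 z7 : ℝ,
      matOf A = Gmat x2 x3 x4 x5 x6 x7 y3 y4 y5 y6 y7 z5 z6 z7) := by
  have hAe : ∀ j, A (oe j) = ∑ k, matOf A k j • oe k := by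
    intro j
    have him : oRe (A (oe j)) = 0 := hAIm _ (oeIm j)
    have h := decomp (A (oe j))
    rw [him, zero_smul, zero_add] at h
    exact h
  constructor
  · rintro ⟨hskew, hder⟩
    have hsk : ∀ i j, matOf A j i = -matOf A i j := by
      intro i j
      have h := congrFun (congrFun hskew i) j
      simpa [Matrix.transpose_apply, Matrix.neg_apply] using h
    have h01 := hder (oe 0) (oe 1)
    rw [omul_oe_0_1, hAe 0, hAe 1, hAe 2] at h01
    have h03 := hder (oe 0) (oe 3)
    rw [omul_oe_0_3, hAe 0, hAe 3, hAe 4] at h03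
    have h13 := hder (oe 1) (oe 3)
    rw [omul_oe_1_3, hAe 1, hAe 3, hAe 5] at h13
    have R1 := congrArg (fun v : Octo => v.2.re) h01
    have R2 := congrArg (fun v : Octo => v.2.imI) h01
    have R3 := congrArg (fun v : Octo => v.2.imJ) h01
    have R4 := congrArg (fun v : Octo => v.2.imK) h01
    have R5 := congrArg (fun v : Octo => v.2.imJ) h03
    have R6 := congrArg (fun v : Octo => v.2.imK) h03
    have R7 := congrArg (fun v : Octo => v.2.imK) h13
    simp [Fin.sum_univ_seven, oe0, oe1, oe2, oe3, oe4, oe5, oe6, omul, oone,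
      qre_mul, qimI_mul, qimJ_mul, qimK_mul]
      at R1 R2 R3 R4 R5 R6 R7
    refine ⟨matOf A 1 0, matOf A 2 0, matOf A 3 0, matOf A 4 0, matOf A 5 0, matOf A 6 0,
      matOf A 2 1, matOf A 3 1, matOf A 4 1, matOf A 5 1, matOf A 6 1,
      matOf A 4 3, matOf A 5 3, matOf A 6 3, ?_⟩
    ext i j
    fin_cases i <;> fin_cases j <;>
      simp [Gmat] <;>
      linarith [hsk 0 0, hsk 0 1, hsk 0 2, hsk 0 3, hsk 0 4, hsk 0 5, hsk 0 6, hsk 1 1, hsk 1 2, hsk 1 3, hsk 1 4, hsk 1 5, hsk 1 6, hsk 2 2, hsk 2 3, hsk 2 4, hsk 2 5, hsk 2 6, hsk 3 3, hsk 3 4, hsk 3 5, hsk 3 6, hsk 4 4, hsk 4 5, hsk 4 6, hsk 5 5, hsk 5 6, hsk 6 6, R1, R2, R3, R4, R5, R6, R7]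
  · rintro ⟨x2, x3, x4, x5, x6, x7, y3, y4, y5, y6, y7, z5, z6, z7, hM⟩
    refine ⟨?_, ?_⟩
    · rw [hM]
      ext i j
      fin_cases i <;> fin_cases j <;>
        simp [Gmat, Matrix.transpose_apply, Matrix.neg_apply] <;> ring
    ·
      have h0 : A (oe 0) = ((⟨0,0,x2,x3⟩ : Quaternion ℝ), (⟨x4,x5,x6,x7⟩ : Quaternion ℝ)) := by
        rw [hAe 0, hM]
        ext <;> simp [Gmat, Fin.sum_univ_seven, oe0, oe1, oe2, oe3, oe4, oe5, oe6] <;> try ring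

      have h1 : A (oe 1) = ((⟨0,-x2,0,y3⟩ : Quaternion ℝ), (⟨y4,y5,y6,y7⟩ : Quaternion ℝ)) := by
        rw [hAe 1, hM]
        ext <;> simp [Gmat, Fin.sum_univ_seven, oe0, oe1, oe2, oe3, oe4, oe5, oe6] <;> try ring

      have h2 : A (oe 2) = ((⟨0,-x3,-y3,0⟩ : Quaternion ℝ), (⟨x6-y5,x7+y4,-x4+y7,-x5-y6⟩ : Quaternion ℝ)) := by
        rw [hAe 2, hM]
        ext <;> simp [Gmat, Fin.sum_univ_seven, oe0, oe1, oe2, oe3, oe4, oe5, oe6] <;> try ring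

      have h3 : A (oe 3) = ((⟨0,-x4,-y4,-(x6-y5)⟩ : Quaternion ℝ), (⟨0,z5,z6,z7⟩ : Quaternion ℝ)) := by
        rw [hAe 3, hM]
        ext <;> simp [Gmat, Fin.sum_univ_seven, oe0, oe1, oe2, oe3, oe4, oe5, oe6] <;> try ring

      have h4 : A (oe 4) = ((⟨0,-x5,-y5,-(x7+y4)⟩ : Quaternion ℝ), (⟨-z5,0,x2+z7,x3-z6⟩ : Quaternion ℝ)) := by
        rw [hAe 4, hM]
        ext <;> simp [Gmat, Fin.sum_univ_seven, oe0, oe1, oe2, oe3, oe4, oe5, oe6] <;> try ring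

      have h5 : A (oe 5) = ((⟨0,-x6,-y6,-(-x4+y7)⟩ : Quaternion ℝ), (⟨-z6,-(x2+z7),0,y3+z5⟩ : Quaternion ℝ)) := by
        rw [hAe 5, hM]
        ext <;> simp [Gmat, Fin.sum_univ_seven, oe0, oe1, oe2, oe3, oe4, oe5, oe6] <;> try ring

      have h6 : A (oe 6) = ((⟨0,-x7,-y7,-(-x5-y6)⟩ : Quaternion ℝ), (⟨-z7,-(x3-z6),-(y3+z5),0⟩ : Quaternion ℝ)) := by
        rw [hAe 6, hM]
        ext <;> simp [Gmat, Fin.sum_univ_seven, oe0, oe1, oe2, oe3, oe4, oe5, oe6] <;> try ring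

      exact deriv_extend A hA1 (basis_deriv A hA1 x2 x3 x4 x5 x6 x7 y3 y4 y5 y6 y7 z5 z6 z7 h0 h1 h2 h3 h4 h5 h6)
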